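/- arXiv:2103.11065 — 2 statements merged into one kernel-verified Lean document; each statement's English description precedes it below -/
import Mathlib

section
/- Let ε ≥ 0 and M ∈ ℕ, let (σ_k) be a sequence of states, let (V_k) satisfy V_{k+1} = F_{σ_k} V_k, and let (Ṽ_k) satisfy Ṽ_{k+1} = F̃_k Ṽ_k where (F̃_k W)(σ_k) = (T W)(σ_k) + w̃_k with |w̃_k| ≤ ε and (F̃_k W)(s) = W(s) for s ≠ σ_k. Let (k_n) be a strictly increasing sequence of indices with k_0 = 0 such that, for every n, every state of S appears among σ_{k_n}, …, σ_{k_{n+1}−1}, and k_{n+1} − k_n ≤ M. Then limsup_{n→∞} ‖V_{k_n} − Ṽ_{k_n}‖∞ ≤ Mε/(1−γ). -/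
open Finset Filter

noncomputable def supNorm {S : Type*} [Fintype S] [Nonempty S] (V : S → ℝ) : ℝ :=
  Finset.univ.sup' Finset.univ_nonempty fun s => |V s|

noncomputable def bellmanT {S A : Type*} [Fintype S] [Fintype A] [Nonempty A]
    (P R : S → A → S → ℝ) (γ : ℝ) (V : S → ℝ) : S → ℝ :=
  fun s => Finset.univ.sup' Finset.univ_nonempty
    fun a => ∑ s', P s a s' * (R s a s' + γ * V s')


section Aux
variable {S A : Type*} [Fintype S] [Nonempty S] [Fintype A] [Nonempty A]

lemma abs_le_supNorm (V : S → ℝ) (s : S) : |V s| ≤ supNorm V :=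
  Finset.le_sup' (fun s => |V s|) (Finset.mem_univ s)

lemma supNorm_le {V : S → ℝ} {c : ℝ} (h : ∀ s, |V s| ≤ c) : supNorm V ≤ c :=
  Finset.sup'_le _ _ fun s _ => h s

lemma supNorm_nonneg (V : S → ℝ) : 0 ≤ supNorm V :=
  le_trans (abs_nonneg _) (abs_le_supNorm V (Classical.arbitrary _))

lemma bellman_contract (P R : S → A → S → ℝ)
    (hP0 : ∀ s a s', 0 ≤ P s a s') (hP1 : ∀ s a, ∑ s', P s a s' = 1)
    (γ : ℝ) (hγ0 : 0 ≤ γ) (V W : S → ℝ) (s : S) :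
    |bellmanT P R γ V s - bellmanT P R γ W s| ≤ γ * supNorm (V - W) := by
  have key : ∀ (V W : S → ℝ) (a : A),
      (∑ s', P s a s' * (R s a s' + γ * V s'))
        ≤ (∑ s', P s a s' * (R s a s' + γ * W s')) + γ * supNorm (V - W) := by
    intro V W a
    have h1 : (∑ s', P s a s' * (R s a s' + γ * V s'))
        - (∑ s', P s a s' * (R s a s' + γ * W s'))
        = ∑ s', P s a s' * (γ * (V s' - W s')) := by
      rw [← Finset.sum_sub_distrib]; congr 1; ext s'; ring
    have h2 : ∑ s', P s a s' * (γ * (V s' - W s')) ≤ γ * supNorm (V - W) := by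
      calc ∑ s', P s a s' * (γ * (V s' - W s'))
          ≤ ∑ s', P s a s' * (γ * supNorm (V - W)) := by
            apply Finset.sum_le_sum; intro s' _
            apply mul_le_mul_of_nonneg_left _ (hP0 s a s')
            apply mul_le_mul_of_nonneg_left _ hγ0
            have := abs_le_supNorm (V - W) s'
            have h3 : |V s' - W s'| ≤ supNorm (V - W) := by simpa using this
            exact (abs_le.mp h3).2
        _ = γ * supNorm (V - W) := by
            rw [← Finset.sum_mul, hP1]; ring
    linarith
  have hs : supNorm (V - W) = supNorm (W - V) := by
    unfold supNorm; congr 1; ext s'; simp [abs_sub_comm]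
  rw [abs_sub_le_iff, sub_le_iff_le_add, sub_le_iff_le_add]
  constructor
  · apply Finset.sup'_le; intro a _
    calc (∑ s', P s a s' * (R s a s' + γ * V s'))
        ≤ (∑ s', P s a s' * (R s a s' + γ * W s')) + γ * supNorm (V - W) := key V W a
      _ ≤ γ * supNorm (V - W) + bellmanT P R γ W s := by
          have := Finset.le_sup' (f := fun a => ∑ s', P s a s' * (R s a s' + γ * W s'))
            (Finset.mem_univ a)
          unfold bellmanT; linarith
  · apply Finset.sup'_le; intro a _
    calc (∑ s', P s a s' * (R s a s' + γ * W s'))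
        ≤ (∑ s', P s a s' * (R s a s' + γ * V s')) + γ * supNorm (W - V) := key W V a
      _ ≤ γ * supNorm (V - W) + bellmanT P R γ V s := by
          rw [← hs] at *
          have := Finset.le_sup' (f := fun a => ∑ s', P s a s' * (R s a s' + γ * V s'))
            (Finset.mem_univ a)
          unfold bellmanT; linarith

end Aux

noncomputable def asyncF {S A : Type*} [Fintype S] [Nonempty S] [DecidableEq S]
    [Fintype A] [Nonempty A]
    (P R : S → A → S → ℝ) (γ : ℝ) (σ : S) (V : S → ℝ) : S → ℝ :=
  fun s => if s = σ then bellmanT P R γ V s else V s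

theorem noisy_async_vi_limsup (n : ℕ) [NeZero n] (A : Type*) [Fintype A] [Nonempty A]
    (P R : Fin n → A → Fin n → ℝ)
    (hP0 : ∀ s a s', 0 ≤ P s a s') (hP1 : ∀ s a, ∑ s', P s a s' = 1)
    (γ : ℝ) (hγ0 : 0 ≤ γ) (hγ1 : γ < 1)
    (ε : ℝ) (hε : 0 ≤ ε) (M : ℕ) (σ : ℕ → Fin n)
    (V Vt : ℕ → Fin n → ℝ) (wt : ℕ → ℝ)
    (hV : ∀ j, V (j + 1) = asyncF P R γ (σ j) (V j))
    (hwt : ∀ j, |wt j| ≤ ε)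
    (hVt1 : ∀ j, Vt (j + 1) (σ j) = bellmanT P R γ (Vt j) (σ j) + wt j)
    (hVt2 : ∀ j s, s ≠ σ j → Vt (j + 1) s = Vt j s)
    (kseq : ℕ → ℕ) (hmono : StrictMono kseq) (h0 : kseq 0 = 0)
    (hcover : ∀ m (s : Fin n), ∃ j, kseq m ≤ j ∧ j < kseq (m + 1) ∧ σ j = s)
    (hM : ∀ m, kseq (m + 1) - kseq m ≤ M) :
    Filter.limsup (fun m => supNorm (V (kseq m) - Vt (kseq m))) Filter.atTop ≤
      (M : ℝ) * ε / (1 - γ) := by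
  set D : ℕ → ℝ := fun j => supNorm (V j - Vt j) with hD
  have h1γ : (0:ℝ) < 1 - γ := by linarith
  have hD0 : ∀ j, 0 ≤ D j := fun j => supNorm_nonneg _
  have habs : ∀ j s, |V j s - Vt j s| ≤ D j := by
    intro j s
    have := abs_le_supNorm (V j - Vt j) s
    simpa using this
  -- update at the chosen state
  have step_eq : ∀ j, |V (j+1) (σ j) - Vt (j+1) (σ j)| ≤ γ * D j + ε := by
    intro j
    have hVs : V (j+1) (σ j) = bellmanT P R γ (V j) (σ j) := by
      rw [hV j]; simp [asyncF]
    rw [hVs, hVt1 j]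
    have hc := bellman_contract P R hP0 hP1 γ hγ0 (V j) (Vt j) (σ j)
    have hw := hwt j
    calc |bellmanT P R γ (V j) (σ j) - (bellmanT P R γ (Vt j) (σ j) + wt j)|
        ≤ |bellmanT P R γ (V j) (σ j) - bellmanT P R γ (Vt j) (σ j)| + |wt j| := by
          rw [sub_add_eq_sub_sub]; exact abs_sub (_ - _) _
      _ ≤ γ * D j + ε := add_le_add hc hw
  have step_ne : ∀ j s, s ≠ σ j → V (j+1) s - Vt (j+1) s = V j s - Vt j s := by
    intro j s hs
    have hVs : V (j+1) s = V j s := by rw [hV j]; simp [asyncF, hs]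
    rw [hVs, hVt2 j s hs]
  -- one-step drift
  have hstep : ∀ j, D (j+1) ≤ D j + ε := by
    intro j
    apply supNorm_le
    intro s
    rw [Pi.sub_apply]
    by_cases hs : s = σ j
    · subst hs
      have := step_eq j
      nlinarith [hD0 j]
    · rw [step_ne j s hs]; have := habs j s; linarith
  have drift : ∀ j t, D (j + t) ≤ D j + t * ε := by
    intro j t
    induction t with
    | zero => simp
    | succ t ih =>
        have := hstep (j + t)
        push_cast
        calc D (j + (t+1)) = D ((j + t) + 1) := by ring_nf
          _ ≤ D (j + t) + ε := hstep (j + t)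
          _ ≤ D j + t * ε + ε := by linarith
          _ = D j + ((t:ℝ) + 1) * ε := by ring
  -- persistence: if σ never hits s on [j, t), values at s are frozen
  have persist : ∀ (s : Fin n) (j t : ℕ), j ≤ t → (∀ i, j ≤ i → i < t → σ i ≠ s) →
      V t s = V j s ∧ Vt t s = Vt j s := by
    intro s j t hjt hno
    induction t, hjt using Nat.le_induction with
    | base => exact ⟨rfl, rfl⟩
    | succ t ht ih =>
        have hne : σ t ≠ s := hno t ht (Nat.lt_succ_self t)
        have hne' : s ≠ σ t := fun h => hne h.symm
        have ih' := ih (fun i hi hit => hno i hi (Nat.lt_succ_of_lt hit))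
        constructor
        · rw [hV t]; simp [asyncF, hne']; exact ih'.1
        · rw [hVt2 t s hne']; exact ih'.2
  -- sweep bound
  have sweep : ∀ m, D (kseq (m+1)) ≤ γ * D (kseq m) + M * ε := by
    intro m
    have hkm : kseq m < kseq (m+1) := hmono (Nat.lt_succ_self m)
    apply supNorm_le
    intro s
    rw [Pi.sub_apply]
    obtain ⟨j0, hj0a, hj0b, hj0c⟩ := hcover m s
    -- the last update time of s in the window
    set Jset := (Finset.Ico (kseq m) (kseq (m+1))).filter (fun j => σ j = s) with hJ
    have hne : Jset.Nonempty := ⟨j0, by simp [hJ, Finset.mem_filter, Finset.mem_Ico, hj0a, hj0b, hj0c]⟩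
    set j := Jset.max' hne with hj
    have hjmem : j ∈ Jset := Finset.max'_mem _ _
    have hjI : kseq m ≤ j ∧ j < kseq (m+1) := by
      have := hjmem; rw [hJ] at this
      simp only [Finset.mem_filter, Finset.mem_Ico] at this
      exact this.1
    have hjσ : σ j = s := by
      have := hjmem; rw [hJ] at this
      simp only [Finset.mem_filter, Finset.mem_Ico] at this
      exact this.2
    have hlast : ∀ i, j + 1 ≤ i → i < kseq (m+1) → σ i ≠ s := by
      intro i hi1 hi2 hs
      have : i ∈ Jset := by
        rw [hJ]
        simp only [Finset.mem_filter, Finset.mem_Ico]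
        exact ⟨⟨le_trans hjI.1 (le_trans (Nat.le_succ j) hi1), hi2⟩, hs⟩
      have := Finset.le_max' _ _ this
      omega
    have hj1 : j + 1 ≤ kseq (m+1) := hjI.2
    obtain ⟨hVf, hVtf⟩ := persist s (j+1) (kseq (m+1)) hj1 hlast
    rw [hVf, hVtf]
    -- bound at time j+1 at state s = σ j
    have hbd : |V (j+1) s - Vt (j+1) s| ≤ γ * D j + ε := by
      rw [← hjσ]; exact step_eq j
    -- D j ≤ D (kseq m) + (j - kseq m) * ε
    have hdec : j = kseq m + (j - kseq m) := (Nat.add_sub_cancel' hjI.1).symm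
    have hdrift : D j ≤ D (kseq m) + ((j - kseq m : ℕ) : ℝ) * ε := by
      conv_lhs => rw [hdec]
      exact drift (kseq m) (j - kseq m)
    have hdM : (j - kseq m) + 1 ≤ M := by
      have := hM m; omega
    have hdM' : ((j - kseq m : ℕ) : ℝ) + 1 ≤ (M : ℝ) := by exact_mod_cast hdM
    have hd0 : (0:ℝ) ≤ ((j - kseq m : ℕ) : ℝ) := Nat.cast_nonneg _
    calc |V (j+1) s - Vt (j+1) s| ≤ γ * D j + ε := hbd
      _ ≤ γ * (D (kseq m) + ((j - kseq m : ℕ) : ℝ) * ε) + ε := by nlinarith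
      _ ≤ γ * D (kseq m) + (M : ℝ) * ε := by
          nlinarith [mul_nonneg (mul_nonneg hd0 hε) (by linarith : (0:ℝ) ≤ 1 - γ),
            mul_le_mul_of_nonneg_right hdM' hε]
  -- closed-form geometric bound
  set c : ℝ := (M : ℝ) * ε with hc
  have hc0 : 0 ≤ c := mul_nonneg (Nat.cast_nonneg _) hε
  have hclosed : ∀ m, D (kseq m) ≤ γ ^ m * D (kseq 0) + c / (1 - γ) := by
    intro m
    induction m with
    | zero => simp; positivity
    | succ m ih =>
        have hkey : γ * (c / (1 - γ)) + c = c / (1 - γ) := by field_simp; ring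
        calc D (kseq (m+1)) ≤ γ * D (kseq m) + c := sweep m
          _ ≤ γ * (γ ^ m * D (kseq 0) + c / (1 - γ)) + c := by nlinarith
          _ = γ ^ (m+1) * D (kseq 0) + (γ * (c / (1 - γ)) + c) := by ring
          _ = γ ^ (m+1) * D (kseq 0) + c / (1 - γ) := by rw [hkey]
  -- pass to limsup
  have hy : Filter.Tendsto (fun m => γ ^ m * D (kseq 0) + c / (1 - γ)) Filter.atTop
      (nhds (c / (1 - γ))) := by
    have h1 : Filter.Tendsto (fun m : ℕ => γ ^ m) Filter.atTop (nhds 0) :=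
      tendsto_pow_atTop_nhds_zero_of_lt_one hγ0 hγ1
    have h2 := (h1.mul_const (D (kseq 0))).add_const (c / (1 - γ))
    simpa using h2
  have hbound : Filter.limsup (fun m => D (kseq m)) Filter.atTop ≤
      Filter.limsup (fun m => γ ^ m * D (kseq 0) + c / (1 - γ)) Filter.atTop := by
    exact Filter.limsup_le_limsup (Filter.Eventually.of_forall hclosed)
      (Filter.isCoboundedUnder_le_of_eventually_le Filter.atTop (Filter.Eventually.of_forall fun m => hD0 (kseq m)))
      hy.isBoundedUnder_le
  calc Filter.limsup (fun m => D (kseq m)) Filter.atTop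
      ≤ _ := hbound
    _ = c / (1 - γ) := hy.limsup_eq
    _ = (M : ℝ) * ε / (1 - γ) := by rw [hc]
end

section
/- (Asynchronous Approximate Value Iteration.) Let ε ≥ 0 and M ∈ ℕ, let (σ_k) be a sequence of states, and let (Ṽ_k) be the asynchronous noisy value-iteration sequence from an arbitrary initial vector Ṽ_0: Ṽ_{k+1} = F̃_k Ṽ_k where (F̃_k W)(σ_k) = (T W)(σ_k) + w̃_k with |w̃_k| ≤ ε and (F̃_k W)(s) = W(s) for s ≠ σ_k. Let (k_n) be a strictly increasing sequence of indices with k_0 = 0 such that, for every n, every state of S appears among σ_{k_n}, …, σ_{k_{n+1}−1}, and k_{n+1} − k_n ≤ M. Then limsup_{n→∞} ‖V* − Ṽ_{k_n}‖∞ ≤ Mε/(1−γ), where V* is the unique fixed point of T. -/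
open Finset Filter

/-! The error `d j = ‖V* - Ṽ_j‖` grows by at most `ε` per update, since `T` is a `γ`-contraction
in the sup norm. In the sweep `[k_m, k_{m+1})` every state `s` is updated, and after its last
update `j` its value is no longer touched; that update left an error of at most
`γ d_j + ε ≤ γ (d_{k_m} + (j - k_m) ε) + ε ≤ γ d_{k_m} + M ε`. Hence
`d_{k_{m+1}} ≤ γ d_{k_m} + M ε`, and this linear recursion forces
`limsup d_{k_m} ≤ M ε / (1 - γ)`. -/

lemma supNorm_eq_norm {S : Type*} [Fintype S] [Nonempty S] (V : S → ℝ) : supNorm V = ‖V‖ := by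
  refine le_antisymm (sup'_le _ _ fun s _ => norm_le_pi_norm V s) ?_
  have hV : ∀ s, |V s| ≤ supNorm V := fun s => le_sup' (fun s => |V s|) (mem_univ s)
  exact (pi_norm_le_iff_of_nonneg ((abs_nonneg _).trans (hV (Classical.arbitrary S)))).2 hV

lemma abs_sup'_sub_sup'_le {ι : Type*} {s : Finset ι} (H : s.Nonempty) {f g : ι → ℝ} {c : ℝ}
    (h : ∀ i ∈ s, |f i - g i| ≤ c) : |s.sup' H f - s.sup' H g| ≤ c := by
  have key : ∀ f g : ι → ℝ, (∀ i ∈ s, f i - g i ≤ c) → s.sup' H f - s.sup' H g ≤ c :=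
    fun f g h => sub_le_iff_le_add.2 <| sup'_le _ _ fun i hi =>
      (sub_le_iff_le_add.1 (h i hi)).trans (add_le_add_right (le_sup' g hi) c)
  exact abs_sub_le_iff.2
    ⟨key f g fun i hi => (abs_sub_le_iff.1 (h i hi)).1,
      key g f fun i hi => (abs_sub_le_iff.1 (h i hi)).2⟩

lemma abs_sum_mul_le_norm {S : Type*} [Fintype S] {p : S → ℝ} (hp0 : ∀ s, 0 ≤ p s)
    (hp1 : ∑ s, p s = 1) (x : S → ℝ) : |∑ s, p s * x s| ≤ ‖x‖ :=
  calc |∑ s, p s * x s| ≤ ∑ s, |p s * x s| := abs_sum_le_sum_abs _ _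
    _ ≤ ∑ s, p s * ‖x‖ := sum_le_sum fun s _ => by
        rw [abs_mul, abs_of_nonneg (hp0 s)]
        exact mul_le_mul_of_nonneg_left (norm_le_pi_norm x s) (hp0 s)
    _ = ‖x‖ := by rw [← sum_mul, hp1, one_mul]

section Bellman

variable {S A : Type*} [Fintype S] [Fintype A] [Nonempty A] {P R : S → A → S → ℝ} {γ : ℝ}

lemma abs_bellmanT_sub_le (hP0 : ∀ s a s', 0 ≤ P s a s') (hP1 : ∀ s a, ∑ s', P s a s' = 1)
    (hγ : 0 ≤ γ) (V W : S → ℝ) (s : S) :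
    |bellmanT P R γ V s - bellmanT P R γ W s| ≤ γ * ‖V - W‖ :=
  abs_sup'_sub_sup'_le _ fun a _ => by
    have hdiff : ∑ s', P s a s' * (R s a s' + γ * V s') - ∑ s', P s a s' * (R s a s' + γ * W s')
        = γ * ∑ s', P s a s' * (V - W) s' := by
      rw [← sum_sub_distrib, mul_sum]
      exact sum_congr rfl fun s' _ => by simp only [Pi.sub_apply]; ring
    rw [hdiff, abs_mul, abs_of_nonneg hγ]
    exact mul_le_mul_of_nonneg_left (abs_sum_mul_le_norm (hP0 s a) (hP1 s a) _) hγ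

lemma abs_sub_le_of_noisy_bellman_update (hP0 : ∀ s a s', 0 ≤ P s a s')
    (hP1 : ∀ s a, ∑ s', P s a s' = 1) (hγ : 0 ≤ γ) {Vstar : S → ℝ}
    (hfix : bellmanT P R γ Vstar = Vstar) {V W : S → ℝ} {s : S} {w ε : ℝ} (hw : |w| ≤ ε)
    (hW : W s = bellmanT P R γ V s + w) : |Vstar s - W s| ≤ γ * ‖Vstar - V‖ + ε := by
  rw [hW, sub_add_eq_sub_sub]
  nth_rewrite 1 [← hfix]
  exact (abs_sub _ _).trans (add_le_add (abs_bellmanT_sub_le hP0 hP1 hγ Vstar V s) hw)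

end Bellman

lemma le_add_mul_of_succ_le_add {d : ℕ → ℝ} {ε : ℝ} (h : ∀ j, d (j + 1) ≤ d j + ε) {i j : ℕ}
    (hij : i ≤ j) : d j ≤ d i + (j - i) * ε := by
  have hanti : Antitone fun j : ℕ => d j - j * ε :=
    antitone_nat_of_succ_le fun j => by push_cast; linarith [h j]
  linarith [hanti hij]

lemma limsup_le_div_of_le_mul_add {x : ℕ → ℝ} {γ c : ℝ} (hx : ∀ m, 0 ≤ x m) (hγ0 : 0 ≤ γ)
    (hγ1 : γ < 1) (h : ∀ m, x (m + 1) ≤ γ * x m + c) : limsup x atTop ≤ c / (1 - γ) := by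
  set C := c / (1 - γ)
  have hC : γ * C + c = C := by
    simp only [C]
    field_simp [(sub_pos.2 hγ1).ne']
    ring
  have hgeo : ∀ m, x m ≤ C + γ ^ m * (x 0 - C) := fun m => by
    have := le_geom (u := fun m => x m - C) hγ0 m fun k _ => by linarith [h k]
    linarith
  have hlim : Tendsto (fun m => C + γ ^ m * (x 0 - C)) atTop (nhds C) := by
    simpa using tendsto_const_nhds.add
      ((tendsto_pow_atTop_nhds_zero_of_lt_one hγ0 hγ1).mul_const (x 0 - C))
  calc limsup x atTop ≤ limsup (fun m => C + γ ^ m * (x 0 - C)) atTop :=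
        limsup_le_limsup (Eventually.of_forall hgeo) (isCoboundedUnder_le_of_le atTop hx)
          hlim.isBoundedUnder_le
    _ = C := hlim.limsup_eq

lemma exists_last_mem_Ico {p : ℕ → Prop} {a b : ℕ} (h : ∃ j, a ≤ j ∧ j < b ∧ p j) :
    ∃ j, a ≤ j ∧ j < b ∧ p j ∧ ∀ l, j < l → l < b → ¬ p l := by
  classical
  obtain ⟨j, hj, hmax⟩ := ((Ico a b).filter p).exists_max_image id (by
    obtain ⟨j, haj, hjb, hj⟩ := h
    exact ⟨j, by simp [haj, hjb, hj]⟩)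
  simp only [mem_filter, mem_Ico] at hj hmax
  exact ⟨j, hj.1.1, hj.1.2, hj.2, fun l hjl hlb hl =>
    (hmax l ⟨⟨by omega, hlb⟩, hl⟩).not_gt hjl⟩

section Asynchronous

variable {S : Type*} {σ : ℕ → S} {V : ℕ → S → ℝ} {Vstar : S → ℝ} {γ ε : ℝ}

lemma apply_eq_of_forall_ne (hstay : ∀ j s, s ≠ σ j → V (j + 1) s = V j s) {j b : ℕ} {s : S}
    (hjb : j < b) (h : ∀ l, j < l → l < b → σ l ≠ s) : V b s = V (j + 1) s := by
  induction b, hjb using Nat.le_induction with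
  | base => rfl
  | succ b hjb ih =>
    rw [hstay b s (h b hjb (lt_add_one b)).symm,
      ih fun l hjl hlb => h l hjl (hlb.trans (lt_add_one b))]

variable [Fintype S]

lemma norm_sub_succ_le_add (hγ1 : γ ≤ 1) (hε : 0 ≤ ε)
    (hupd : ∀ j, |Vstar (σ j) - V (j + 1) (σ j)| ≤ γ * ‖Vstar - V j‖ + ε)
    (hstay : ∀ j s, s ≠ σ j → V (j + 1) s = V j s) (j : ℕ) :
    ‖Vstar - V (j + 1)‖ ≤ ‖Vstar - V j‖ + ε := by
  have hd := norm_nonneg (Vstar - V j)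
  refine (pi_norm_le_iff_of_nonneg (by positivity)).2 fun s => ?_
  by_cases hs : s = σ j
  · subst hs
    have := mul_le_mul_of_nonneg_right hγ1 hd
    exact (hupd j).trans (by linarith)
  · have := norm_le_pi_norm (Vstar - V j) s
    simp only [Pi.sub_apply, hstay j s hs] at this ⊢
    linarith

lemma norm_sub_le_of_sweep (hγ0 : 0 ≤ γ) (hγ1 : γ ≤ 1) (hε : 0 ≤ ε)
    (hupd : ∀ j, |Vstar (σ j) - V (j + 1) (σ j)| ≤ γ * ‖Vstar - V j‖ + ε)
    (hstay : ∀ j s, s ≠ σ j → V (j + 1) s = V j s) {a b M : ℕ}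
    (hcover : ∀ s, ∃ j, a ≤ j ∧ j < b ∧ σ j = s) (hM : b ≤ a + M) :
    ‖Vstar - V b‖ ≤ γ * ‖Vstar - V a‖ + M * ε := by
  refine (pi_norm_le_iff_of_nonneg (by positivity)).2 fun s => ?_
  obtain ⟨j, haj, hjb, rfl, hlast⟩ := exists_last_mem_Ico (hcover s)
  have hgrow := le_add_mul_of_succ_le_add (d := fun j => ‖Vstar - V j‖)
    (norm_sub_succ_le_add hγ1 hε hupd hstay) haj
  have hjM : (j : ℝ) - a + 1 ≤ M := by
    rw [sub_add_eq_add_sub, sub_le_iff_le_add]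
    exact_mod_cast (by omega : j + 1 ≤ M + a)
  have hja : (0 : ℝ) ≤ j - a := sub_nonneg.2 (Nat.cast_le.2 haj)
  calc ‖(Vstar - V b) (σ j)‖ = |Vstar (σ j) - V (j + 1) (σ j)| := by
        rw [Pi.sub_apply, apply_eq_of_forall_ne hstay hjb hlast, Real.norm_eq_abs]
    _ ≤ γ * ‖Vstar - V j‖ + ε := hupd j
    _ ≤ γ * (‖Vstar - V a‖ + (j - a) * ε) + ε := by gcongr
    _ ≤ γ * ‖Vstar - V a‖ + M * ε := by
        nlinarith [mul_le_mul_of_nonneg_right hjM hε,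
          mul_le_mul_of_nonneg_right hγ1 (mul_nonneg hja hε)]

end Asynchronous

theorem async_approximate_value_iteration_general (n : ℕ) [NeZero n] (A : Type*) [Fintype A] [Nonempty A]
    (P R : Fin n → A → Fin n → ℝ)
    (hP0 : ∀ s a s', 0 ≤ P s a s') (hP1 : ∀ s a, ∑ s', P s a s' = 1)
    (γ : ℝ) (hγ0 : 0 ≤ γ) (hγ1 : γ < 1)
    (ε : ℝ) (hε : 0 ≤ ε) (M : ℕ) (σ : ℕ → Fin n)
    (Vt : ℕ → Fin n → ℝ) (wt : ℕ → ℝ)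
    (hwt : ∀ j, |wt j| ≤ ε)
    (hVt1 : ∀ j, Vt (j + 1) (σ j) = bellmanT P R γ (Vt j) (σ j) + wt j)
    (hVt2 : ∀ j s, s ≠ σ j → Vt (j + 1) s = Vt j s)
    (kseq : ℕ → ℕ)
    (hcover : ∀ m (s : Fin n), ∃ j, kseq m ≤ j ∧ j < kseq (m + 1) ∧ σ j = s)
    (hM : ∀ m, kseq (m + 1) - kseq m ≤ M)
    (Vstar : Fin n → ℝ) (hfix : bellmanT P R γ Vstar = Vstar) :
    Filter.limsup (fun m => supNorm (Vstar - Vt (kseq m))) Filter.atTop ≤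
      (M : ℝ) * ε / (1 - γ) := by
  have hupd : ∀ j, |Vstar (σ j) - Vt (j + 1) (σ j)| ≤ γ * ‖Vstar - Vt j‖ + ε := fun j =>
    abs_sub_le_of_noisy_bellman_update hP0 hP1 hγ0 hfix (hwt j) (hVt1 j)
  have hsweep : ∀ m, ‖Vstar - Vt (kseq (m + 1))‖ ≤ γ * ‖Vstar - Vt (kseq m)‖ + M * ε :=
    fun m => norm_sub_le_of_sweep hγ0 hγ1.le hε hupd hVt2 (hcover m) (by have := hM m; omega)
  simp only [supNorm_eq_norm]
  exact limsup_le_div_of_le_mul_add (fun m => norm_nonneg _) hγ0 hγ1 hsweep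

theorem async_approximate_value_iteration (n : ℕ) [NeZero n] (A : Type*) [Fintype A] [Nonempty A]
    (P R : Fin n → A → Fin n → ℝ)
    (hP0 : ∀ s a s', 0 ≤ P s a s') (hP1 : ∀ s a, ∑ s', P s a s' = 1)
    (γ : ℝ) (hγ0 : 0 ≤ γ) (hγ1 : γ < 1)
    (ε : ℝ) (hε : 0 ≤ ε) (M : ℕ) (σ : ℕ → Fin n)
    (Vt : ℕ → Fin n → ℝ) (wt : ℕ → ℝ)
    (hwt : ∀ j, |wt j| ≤ ε)
    (hVt1 : ∀ j, Vt (j + 1) (σ j) = bellmanT P R γ (Vt j) (σ j) + wt j)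
    (hVt2 : ∀ j s, s ≠ σ j → Vt (j + 1) s = Vt j s)
    (kseq : ℕ → ℕ) (hmono : StrictMono kseq) (h0 : kseq 0 = 0)
    (hcover : ∀ m (s : Fin n), ∃ j, kseq m ≤ j ∧ j < kseq (m + 1) ∧ σ j = s)
    (hM : ∀ m, kseq (m + 1) - kseq m ≤ M)
    (Vstar : Fin n → ℝ) (hfix : bellmanT P R γ Vstar = Vstar) :
    Filter.limsup (fun m => supNorm (Vstar - Vt (kseq m))) Filter.atTop ≤
      (M : ℝ) * ε / (1 - γ) :=
  async_approximate_value_iteration_general n A P R hP0 hP1 γ hγ0 hγ1 ε hε M σ Vt wt hwt hVt1 hVt2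
    kseq hcover hM Vstar hfix
end
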